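/- arXiv:2105.04651 — 5 statements merged into one kernel-verified Lean document; each statement's English description precedes it below -/
import Mathlib

section
/- Let x ∈ ℝⁿ with x ≠ 0, and let φ : ℝⁿ → ℝ^d be eventually affine along the ray of x, with matrix U ∈ ℝ^{d×n} and offset c ∈ ℝ^d, and suppose Ux ≠ 0. Let Σ ∈ ℝ^{d×d} be a symmetric positive definite matrix whose smallest eigenvalue is λ₁ > 0, and let μ ∈ ℝ^d. Define z(x') = μᵀφ(x') / √(1 + (π/8)·φ(x')ᵀ Σ φ(x')) for x' ∈ ℝⁿ. Then the limit lim_{δ→∞} σ(|z(δx)|) exists and satisfies lim_{δ→∞} σ(|z(δx)|) ≤ σ( ‖μ‖ / √((π/8)·λ₁) ), where ‖μ‖ is the Euclidean norm of μ. -/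
open Matrix Filter

/-- The logistic sigmoid `σ(t) = 1 / (1 + exp (-t))`. -/
noncomputable def sigmoid (t : ℝ) : ℝ := 1 / (1 + Real.exp (-t))

/-!
Along the ray, `φ (δ • x) = δ • v + c` with `v = U x ≠ 0`, so `z (δ • x)` is an affine function of
`δ` divided by the square root of a quadratic in `δ` with leading coefficient `(π/8) vᵀ S v > 0`;
hence it converges to `μᵀ v / √((π/8) vᵀ S v)`. Cauchy–Schwarz bounds `|μᵀ v|` by `‖μ‖ ‖v‖`, the
Rayleigh bound `vᵀ S v ≥ λ₁ ‖v‖²` bounds the denominator from below, and `σ` is monotone.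
-/

open Topology

lemma sigmoid_eq_real_sigmoid : sigmoid = Real.sigmoid := by
  ext t
  rw [sigmoid, Real.sigmoid_def, one_div]

lemma dotProduct_mulVec_smul_add {ι R : Type*} [Fintype ι] [CommRing R]
    (S : Matrix ι ι R) (t : R) (v c : ι → R) :
    (t • v + c) ⬝ᵥ S *ᵥ (t • v + c) =
      v ⬝ᵥ S *ᵥ v * t ^ 2 + (v ⬝ᵥ S *ᵥ c + c ⬝ᵥ S *ᵥ v) * t + c ⬝ᵥ S *ᵥ c := by
  simp only [mulVec_add, mulVec_smul, dotProduct_add, add_dotProduct, smul_dotProduct,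
    dotProduct_smul, smul_eq_mul]
  ring

lemma tendsto_affine_div_sqrt_quadratic {a b A B C : ℝ} (hA : 0 < A) :
    Tendsto (fun t => (a * t + b) / √(A * t ^ 2 + B * t + C)) atTop (𝓝 (a / √A)) := by
  -- substitute `s = t⁻¹`: the rescaled expression is continuous at `s = 0`
  set g : ℝ → ℝ := fun s => (a + b * s) / √(A + B * s + C * s ^ 2)
  have hg : ContinuousAt g 0 := by
    refine ContinuousAt.div (by fun_prop) (by fun_prop) ?_
    simpa using (Real.sqrt_pos.2 hA).ne'
  have hg0 : g 0 = a / √A := by simp [g]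
  refine (hg0 ▸ hg.tendsto.comp tendsto_inv_atTop_zero).congr' ?_
  filter_upwards [eventually_gt_atTop 0] with t ht
  have hquad : A * t ^ 2 + B * t + C = t ^ 2 * (A + B * t⁻¹ + C * t⁻¹ ^ 2) := by
    field_simp
  have hlin : a * t + b = t * (a + b * t⁻¹) := by
    field_simp
  simp only [Function.comp, g]
  rw [hquad, hlin, Real.sqrt_mul (sq_nonneg t), Real.sqrt_sq ht.le, mul_div_mul_left _ _ ht.ne']

lemma Matrix.IsHermitian.mul_dotProduct_self_le {ι : Type*} [Fintype ι] [DecidableEq ι]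
    {S : Matrix ι ι ℝ} (hS : S.IsHermitian) {lam₁ : ℝ}
    (hmin : ∀ lam : ℝ, (∃ w : ι → ℝ, w ≠ 0 ∧ S *ᵥ w = lam • w) → lam₁ ≤ lam) (w : ι → ℝ) :
    lam₁ * (w ⬝ᵥ w) ≤ w ⬝ᵥ S *ᵥ w := by
  set T := S - lam₁ • (1 : Matrix ι ι ℝ)
  have hT : T.IsHermitian := hS.sub (by simp [IsHermitian])
  have hTmulVec (u : ι → ℝ) : T *ᵥ u = S *ᵥ u - lam₁ • u := by
    simp [T, sub_mulVec, smul_mulVec]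
  -- every eigenvector of `T` is one of `S`, with eigenvalue shifted by `lam₁`
  have hT_eig (j : ι) : 0 ≤ hT.eigenvalues j := by
    have hu : (⇑(hT.eigenvectorBasis j) : ι → ℝ) ≠ 0 := fun h =>
      hT.eigenvectorBasis.orthonormal.ne_zero j (by ext i; exact congrFun h i)
    have hS_eig : S *ᵥ ⇑(hT.eigenvectorBasis j) =
        (hT.eigenvalues j + lam₁) • ⇑(hT.eigenvectorBasis j) := by
      rw [add_smul, ← sub_eq_iff_eq_add, ← hTmulVec, hT.mulVec_eigenvectorBasis]
    linarith [hmin _ ⟨_, hu, hS_eig⟩]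
  have hT_nonneg := (hT.posSemidef_iff_eigenvalues_nonneg.mpr hT_eig).dotProduct_mulVec_nonneg w
  rw [hTmulVec] at hT_nonneg
  simp only [star_trivial, dotProduct_sub, dotProduct_smul, smul_eq_mul] at hT_nonneg
  linarith

lemma abs_dotProduct_le_sqrt_mul_sqrt {ι : Type*} [Fintype ι] (μ v : ι → ℝ) :
    |μ ⬝ᵥ v| ≤ √(∑ i, μ i ^ 2) * √(∑ i, v i ^ 2) := by
  rw [← Real.sqrt_mul (by positivity)]
  exact Real.abs_le_sqrt (Finset.sum_mul_sq_le_sq_mul_sq _ μ v)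

lemma abs_dotProduct_div_sqrt_le {ι : Type*} [Fintype ι] [DecidableEq ι]
    {S : Matrix ι ι ℝ} (hS : S.IsHermitian) {lam₁ : ℝ} (hlam : 0 < lam₁)
    (hmin : ∀ lam : ℝ, (∃ w : ι → ℝ, w ≠ 0 ∧ S *ᵥ w = lam • w) → lam₁ ≤ lam)
    {k : ℝ} (hk : 0 < k) (μ : ι → ℝ) {v : ι → ℝ} (hv : v ≠ 0) :
    |μ ⬝ᵥ v| / √(k * (v ⬝ᵥ S *ᵥ v)) ≤ √(∑ i, μ i ^ 2) / √(k * lam₁) := by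
  have hvv : v ⬝ᵥ v = ∑ i, v i ^ 2 := by simp [dotProduct, sq]
  have hv_norm : 0 < √(∑ i, v i ^ 2) := by
    rw [← hvv]
    exact Real.sqrt_pos.2 (by simpa using dotProduct_star_self_pos_iff.mpr hv)
  have hden : √(k * lam₁) * √(∑ i, v i ^ 2) ≤ √(k * (v ⬝ᵥ S *ᵥ v)) := by
    rw [← Real.sqrt_mul (by positivity), ← hvv, mul_assoc]
    exact Real.sqrt_le_sqrt (mul_le_mul_of_nonneg_left (hS.mul_dotProduct_self_le hmin v) hk.le)
  calc |μ ⬝ᵥ v| / √(k * (v ⬝ᵥ S *ᵥ v))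
      ≤ √(∑ i, μ i ^ 2) * √(∑ i, v i ^ 2) / (√(k * lam₁) * √(∑ i, v i ^ 2)) :=
        div_le_div₀ (by positivity) (abs_dotProduct_le_sqrt_mul_sqrt μ v) (by positivity) hden
    _ = √(∑ i, μ i ^ 2) / √(k * lam₁) := mul_div_mul_right _ _ hv_norm.ne'

theorem asymptotic_confidence_bound_general {n d : ℕ}
    (x : Fin n → ℝ)
    (φ : (Fin n → ℝ) → (Fin d → ℝ))
    (U : Matrix (Fin d) (Fin n) ℝ) (c : Fin d → ℝ)
    (δ₀ : ℝ)
    (hφ : ∀ δ : ℝ, δ₀ ≤ δ → φ (δ • x) = δ • U.mulVec x + c)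
    (hUx : U.mulVec x ≠ 0)
    (S : Matrix (Fin d) (Fin d) ℝ) (hSpd : S.PosDef)
    (lam₁ : ℝ) (hlam_pos : 0 < lam₁)
    (hlam_min : ∀ lam : ℝ, (∃ w : Fin d → ℝ, w ≠ 0 ∧ S.mulVec w = lam • w) → lam₁ ≤ lam)
    (μ : Fin d → ℝ)
    (z : (Fin n → ℝ) → ℝ)
    (hz : ∀ x' : Fin n → ℝ,
      z x' = (μ ⬝ᵥ φ x') / Real.sqrt (1 + (Real.pi / 8) * (φ x' ⬝ᵥ S.mulVec (φ x')))) :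
    ∃ L : ℝ,
      Tendsto (fun δ : ℝ => sigmoid |z (δ • x)|) atTop (nhds L) ∧
        L ≤ sigmoid (Real.sqrt (∑ i, (μ i) ^ 2) / Real.sqrt ((Real.pi / 8) * lam₁)) := by
  set v := U *ᵥ x
  set k := Real.pi / 8
  have hk : 0 < k := by positivity
  have hv_quad : 0 < v ⬝ᵥ S *ᵥ v := by simpa using hSpd.dotProduct_mulVec_pos hUx
  have hz_ray : ∀ᶠ δ in atTop, (μ ⬝ᵥ v * δ + μ ⬝ᵥ c) / √(k * (v ⬝ᵥ S *ᵥ v) * δ ^ 2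
      + k * (v ⬝ᵥ S *ᵥ c + c ⬝ᵥ S *ᵥ v) * δ + (k * (c ⬝ᵥ S *ᵥ c) + 1)) = z (δ • x) := by
    filter_upwards [eventually_ge_atTop δ₀] with δ hδ
    rw [hz, hφ δ hδ, dotProduct_mulVec_smul_add, dotProduct_add, dotProduct_smul, smul_eq_mul]
    ring_nf
  have hz_lim := (tendsto_affine_div_sqrt_quadratic (mul_pos hk hv_quad)).congr' hz_ray
  rw [sigmoid_eq_real_sigmoid]
  refine ⟨_, ((continuous_sigmoid.comp continuous_abs).tendsto _).comp hz_lim, Real.sigmoid_le ?_⟩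
  rw [abs_div, abs_of_nonneg (Real.sqrt_nonneg _)]
  exact abs_dotProduct_div_sqrt_le hSpd.isHermitian hlam_pos hlam_min hk μ hUx

/-- Asymptotic confidence bound for a Bayesian last layer over a feature map that is
eventually affine along the ray of `x`. -/
theorem asymptotic_confidence_bound {n d : ℕ}
    (x : Fin n → ℝ) (hx : x ≠ 0)
    (φ : (Fin n → ℝ) → (Fin d → ℝ))
    (U : Matrix (Fin d) (Fin n) ℝ) (c : Fin d → ℝ)
    (δ₀ : ℝ) (hδ₀ : 0 < δ₀)
    (hφ : ∀ δ : ℝ, δ₀ ≤ δ → φ (δ • x) = δ • U.mulVec x + c)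
    (hUx : U.mulVec x ≠ 0)
    (S : Matrix (Fin d) (Fin d) ℝ) (hSsymm : S.IsSymm) (hSpd : S.PosDef)
    (lam₁ : ℝ) (hlam_pos : 0 < lam₁)
    (hlam_eig : ∃ w : Fin d → ℝ, w ≠ 0 ∧ S.mulVec w = lam₁ • w)
    (hlam_min : ∀ lam : ℝ, (∃ w : Fin d → ℝ, w ≠ 0 ∧ S.mulVec w = lam • w) → lam₁ ≤ lam)
    (μ : Fin d → ℝ)
    (z : (Fin n → ℝ) → ℝ)
    (hz : ∀ x' : Fin n → ℝ,
      z x' = (μ ⬝ᵥ φ x') / Real.sqrt (1 + (Real.pi / 8) * (φ x' ⬝ᵥ S.mulVec (φ x')))) :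
    ∃ L : ℝ,
      Tendsto (fun δ : ℝ => sigmoid |z (δ • x)|) atTop (nhds L) ∧
        L ≤ sigmoid (Real.sqrt (∑ i, (μ i) ^ 2) / Real.sqrt ((Real.pi / 8) * lam₁)) :=
  asymptotic_confidence_bound_general x φ U c δ₀ hφ hUx S hSpd lam₁ hlam_pos hlam_min μ z hz
end

section
/- Let x ∈ ℝⁿ and let φ : ℝⁿ → ℝ^d be eventually affine along the ray of x. Then the composition ReLU ∘ φ : ℝⁿ → ℝ^d, where (ReLU(y))ᵢ = max(yᵢ, 0) componentwise, is eventually affine along the ray of x. -/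
open Matrix

/-- `φ : ℝⁿ → ℝ^d` is eventually affine along the ray of `x` if there exist `δ₀ > 0`,
a matrix `U` and an offset `c` with `φ (δ • x) = δ • (U x) + c` for all `δ ≥ δ₀`. -/
def EventuallyAffineAlongRay {n d : ℕ} (x : Fin n → ℝ)
    (φ : (Fin n → ℝ) → (Fin d → ℝ)) : Prop :=
  ∃ δ₀ : ℝ, 0 < δ₀ ∧ ∃ U : Matrix (Fin d) (Fin n) ℝ, ∃ c : Fin d → ℝ,
    ∀ δ : ℝ, δ₀ ≤ δ → φ (δ • x) = δ • U.mulVec x + c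

/-- Postcomposition with the componentwise ReLU preserves being eventually affine
along a ray. -/
theorem relu_comp_eventuallyAffineAlongRay {n d : ℕ} (x : Fin n → ℝ)
    (φ : (Fin n → ℝ) → (Fin d → ℝ)) (hφ : EventuallyAffineAlongRay x φ) :
    EventuallyAffineAlongRay x (fun x' i => max (φ x' i) 0) := by
  obtain ⟨δ₀, hδ₀, U, c, hU⟩ := hφ
  set a : Fin d → ℝ := U.mulVec x with ha
  refine ⟨δ₀ + ∑ i, |c i| / |a i|, add_pos_of_pos_of_nonneg hδ₀ (by positivity), ?_⟩
  refine ⟨fun i j => if 0 < a i then U i j else 0,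
    fun i => if 0 < a i then c i else if a i = 0 then max (c i) 0 else 0, ?_⟩
  intro δ hδ
  have hδ0 : δ₀ ≤ δ := le_trans (le_add_of_nonneg_right (by positivity)) hδ
  have hkey : ∀ i, |a i| ≠ 0 → |c i| ≤ δ * |a i| := by
    intro i hai
    have h1 : |c i| / |a i| ≤ δ := by
      refine le_trans ?_ hδ
      have h0 : (0:ℝ) ≤ δ₀ := hδ₀.le
      have : |c i| / |a i| ≤ ∑ j, |c j| / |a j| :=
        Finset.single_le_sum (f := fun j => |c j| / |a j|)
          (fun j _ => by positivity) (Finset.mem_univ i)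
      linarith
    have hpos : 0 < |a i| := lt_of_le_of_ne (abs_nonneg _) (Ne.symm hai)
    calc |c i| = |c i| / |a i| * |a i| := by field_simp
    _ ≤ δ * |a i| := by nlinarith
  funext i
  have hmv : Matrix.mulVec (fun i j => if 0 < a i then U i j else 0) x i
      = if 0 < a i then a i else 0 := by
    simp only [Matrix.mulVec, dotProduct]
    split_ifs with h
    · rfl
    · simp
  simp only [hU δ hδ0, Pi.add_apply, Pi.smul_apply, smul_eq_mul, hmv]
  rcases lt_trichotomy (a i) 0 with h | h | h
  · have hne : |a i| ≠ 0 := by simp [abs_eq_zero, ne_of_lt h]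
    have := hkey i hne
    rw [abs_of_neg h] at this
    have hle : δ * a i + c i ≤ 0 := by
      have : c i ≤ |c i| := le_abs_self _
      nlinarith [hkey i hne, abs_of_neg h]
    simp only [if_neg (not_lt.mpr (le_of_lt h)), if_neg (ne_of_lt h)]
    simp [max_eq_right hle]
  · simp [h]
  · have hne : |a i| ≠ 0 := by simp [abs_eq_zero, ne_of_gt h]
    have hge : 0 ≤ δ * a i + c i := by
      have : -c i ≤ |c i| := neg_le_abs _
      nlinarith [hkey i hne, abs_of_pos h]
    simp only [if_pos h]
    simp [max_eq_left hge]
end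

section
/- Let u, c, μ ∈ ℝ^d with u ≠ 0, let Σ ∈ ℝ^{d×d} be symmetric positive definite, and let κ > 0. Then the limit as δ → ∞ of |μᵀ(δu + c)| / √(1 + κ·(δu + c)ᵀ Σ (δu + c)) exists and equals |μᵀu| / √(κ · uᵀ Σ u). -/
open Matrix Filter

/-- The asymptotic value along a ray of the probit-approximated logit. -/
theorem logit_limit_along_ray {d : ℕ} (u c μ : Fin d → ℝ) (hu : u ≠ 0)
    (S : Matrix (Fin d) (Fin d) ℝ) (hSsymm : S.IsSymm) (hSpd : S.PosDef)
    (κ : ℝ) (hκ : 0 < κ) :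
    Tendsto
      (fun δ : ℝ => |μ ⬝ᵥ (δ • u + c)| /
        Real.sqrt (1 + κ * ((δ • u + c) ⬝ᵥ S.mulVec (δ • u + c))))
      atTop (nhds (|μ ⬝ᵥ u| / Real.sqrt (κ * (u ⬝ᵥ S.mulVec u)))) := by
  have hq : 0 < u ⬝ᵥ S.mulVec u := by
    have := hSpd.re_dotProduct_pos hu
    simpa using this
  set A := μ ⬝ᵥ u with hA
  set B := μ ⬝ᵥ c with hB
  set P := u ⬝ᵥ S.mulVec u with hP
  set Q := u ⬝ᵥ S.mulVec c + c ⬝ᵥ S.mulVec u with hQ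
  set R := c ⬝ᵥ S.mulVec c with hR
  have hnum : ∀ δ : ℝ, μ ⬝ᵥ (δ • u + c) = δ * A + B := by
    intro δ
    simp [hA, hB, dotProduct_add, dotProduct_smul, smul_eq_mul]
  have hden : ∀ δ : ℝ, (δ • u + c) ⬝ᵥ S.mulVec (δ • u + c)
      = δ ^ 2 * P + δ * Q + R := by
    intro δ
    simp only [hP, hQ, hR, Matrix.mulVec_add, Matrix.mulVec_smul, dotProduct_add,
      add_dotProduct, smul_dotProduct, dotProduct_smul, smul_eq_mul]
    ring
  set h : ℝ → ℝ := fun t =>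
    |A + t * B| / Real.sqrt (t ^ 2 + κ * (P + t * Q + t ^ 2 * R)) with hh
  have hcont : ContinuousAt h 0 := by
    apply ContinuousAt.div
    · fun_prop
    · fun_prop
    · simp only [ne_eq]
      have : (0:ℝ) < Real.sqrt ((0:ℝ) ^ 2 + κ * (P + 0 * Q + 0 ^ 2 * R)) := by
        apply Real.sqrt_pos.2
        have : (0:ℝ) ^ 2 + κ * (P + 0 * Q + 0 ^ 2 * R) = κ * P := by ring
        rw [this]; exact mul_pos hκ hq
      exact ne_of_gt this
  have h0 : h 0 = |A| / Real.sqrt (κ * P) := by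
    simp [hh]
  have hinv : Tendsto (fun δ : ℝ => δ⁻¹) atTop (nhds (0:ℝ)) :=
    tendsto_inv_atTop_zero
  have hcomp : Tendsto (fun δ : ℝ => h δ⁻¹) atTop (nhds (|A| / Real.sqrt (κ * P))) := by
    rw [← h0]
    exact hcont.tendsto.comp hinv
  refine hcomp.congr' ?_
  filter_upwards [eventually_gt_atTop (0:ℝ)] with δ hδ
  have h1 : |δ * A + B| = δ * |A + δ⁻¹ * B| := by
    have : δ * A + B = δ * (A + δ⁻¹ * B) := by field_simp
    rw [this, abs_mul, abs_of_pos hδ]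
  have h2 : Real.sqrt (1 + κ * (δ ^ 2 * P + δ * Q + R))
      = δ * Real.sqrt ((δ⁻¹) ^ 2 + κ * (P + δ⁻¹ * Q + (δ⁻¹) ^ 2 * R)) := by
    have heq : 1 + κ * (δ ^ 2 * P + δ * Q + R)
        = δ ^ 2 * ((δ⁻¹) ^ 2 + κ * (P + δ⁻¹ * Q + (δ⁻¹) ^ 2 * R)) := by
      field_simp
    rw [heq, Real.sqrt_mul (by positivity), Real.sqrt_sq hδ.le]
  simp only [hh, hnum, hden, h1, h2]
  rw [mul_div_mul_left _ _ (ne_of_gt hδ)]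
end

section
/- Let (Ω, P) be a probability space, α ∈ [0, 1), and let X and Y be integrable real random variables on Ω. Then CVaR_α(X + Y) ≤ CVaR_α(X) + CVaR_α(Y). -/
open MeasureTheory

/-- The conditional value at risk at level `α` (Rockafellar–Uryasev formulation):
`CVaR_α(X) = inf_{c ∈ ℝ} (c + (1 - α)⁻¹ E[max (X - c) 0])`. -/
noncomputable def cvar {Ω : Type*} [MeasurableSpace Ω] (P : Measure Ω) (α : ℝ)
    (X : Ω → ℝ) : ℝ :=
  ⨅ c : ℝ, c + (1 - α)⁻¹ * ∫ ω, max (X ω - c) 0 ∂P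

lemma cvar_bddBelow {Ω : Type*} [MeasurableSpace Ω] (P : Measure Ω)
    [IsProbabilityMeasure P] (α : ℝ) (hα₀ : 0 ≤ α) (hα₁ : α < 1)
    (X : Ω → ℝ) (hX : Integrable X P) :
    BddBelow (Set.range fun c : ℝ => c + (1 - α)⁻¹ * ∫ ω, max (X ω - c) 0 ∂P) := by
  refine ⟨∫ ω, X ω ∂P, ?_⟩
  rintro _ ⟨c, rfl⟩
  have h1α : 0 < 1 - α := by linarith
  have hinv : (1 : ℝ) ≤ (1 - α)⁻¹ := by
    rw [le_inv_comm₀ one_pos h1α]; simpa using hα₀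
  have hnn : 0 ≤ ∫ ω, max (X ω - c) 0 ∂P :=
    integral_nonneg fun ω => le_max_right _ _
  have hge : ∫ ω, X ω ∂P - c ≤ ∫ ω, max (X ω - c) 0 ∂P := by
    have : ∫ ω, X ω - c ∂P ≤ ∫ ω, max (X ω - c) 0 ∂P :=
      integral_mono (hX.sub (integrable_const c))
        ((hX.sub (integrable_const c)).pos_part)
        (fun ω => le_max_left _ _)
    simpa [integral_sub hX (integrable_const c), measure_univ] using this
  calc ∫ ω, X ω ∂P ≤ c + (∫ ω, X ω ∂P - c) := by ring_nf; exact le_rfl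
    _ ≤ c + (1 - α)⁻¹ * ∫ ω, max (X ω - c) 0 ∂P := by
        gcongr
        calc ∫ ω, X ω ∂P - c ≤ ∫ ω, max (X ω - c) 0 ∂P :=
              hge.trans (le_of_eq rfl)
          _ = 1 * ∫ ω, max (X ω - c) 0 ∂P := (one_mul _).symm
          _ ≤ (1 - α)⁻¹ * ∫ ω, max (X ω - c) 0 ∂P := by gcongr

/-- Subadditivity of CVaR: `CVaR_α(X + Y) ≤ CVaR_α(X) + CVaR_α(Y)`. -/
theorem cvar_add_le {Ω : Type*} [MeasurableSpace Ω] (P : Measure Ω)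
    [IsProbabilityMeasure P] (α : ℝ) (hα₀ : 0 ≤ α) (hα₁ : α < 1)
    (X Y : Ω → ℝ) (hX : Integrable X P) (hY : Integrable Y P) :
    cvar P α (fun ω => X ω + Y ω) ≤ cvar P α X + cvar P α Y := by
  have h1α : 0 < 1 - α := by linarith
  refine le_ciInf_add_ciInf fun c d => ?_
  have hbdd := cvar_bddBelow P α hα₀ hα₁ (fun ω => X ω + Y ω) (hX.add hY)
  have key : cvar P α (fun ω => X ω + Y ω) ≤
      (c + d) + (1 - α)⁻¹ * ∫ ω, max (X ω + Y ω - (c + d)) 0 ∂P :=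
    ciInf_le hbdd (c + d)
  refine key.trans ?_
  have hmono : ∫ ω, max (X ω + Y ω - (c + d)) 0 ∂P ≤
      ∫ ω, (max (X ω - c) 0 + max (Y ω - d) 0) ∂P := by
    refine integral_mono (((hX.add hY).sub (integrable_const (c + d))).pos_part)
      (((hX.sub (integrable_const c)).pos_part).add
        ((hY.sub (integrable_const d)).pos_part)) fun ω => ?_
    rcases le_total (X ω + Y ω - (c + d)) 0 with h | h
    · calc max (X ω + Y ω - (c + d)) 0 = 0 := max_eq_right h
        _ ≤ _ := add_nonneg (le_max_right _ _) (le_max_right _ _)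
    · calc max (X ω + Y ω - (c + d)) 0 = X ω + Y ω - (c + d) := max_eq_left h
        _ = (X ω - c) + (Y ω - d) := by ring
        _ ≤ _ := add_le_add (le_max_left _ _) (le_max_left _ _)
  have := integral_add ((hX.sub (integrable_const c)).pos_part)
      ((hY.sub (integrable_const d)).pos_part)
  calc (c + d) + (1 - α)⁻¹ * ∫ ω, max (X ω + Y ω - (c + d)) 0 ∂P
      ≤ (c + d) + (1 - α)⁻¹ * ∫ ω, (max (X ω - c) 0 + max (Y ω - d) 0) ∂P := by
        gcongr
    _ = (c + (1 - α)⁻¹ * ∫ ω, max (X ω - c) 0 ∂P)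
        + (d + (1 - α)⁻¹ * ∫ ω, max (Y ω - d) 0 ∂P) := by
        simp only [Pi.sub_apply] at this
        rw [this]; ring
end

section
/- Let (Ω, P) be a probability space, α ∈ (0, 1), and X an integrable real random variable. Suppose q ∈ ℝ satisfies P(X < q) = α and P(X = q) = 0 (so that P(X ≥ q) = 1 − α > 0). Then the tail conditional expectation equals the Rockafellar–Uryasev infimum: E[X | X ≥ q] = inf over c ∈ ℝ of (c + (1 − α)⁻¹ · E[max(X − c, 0)]), and moreover the infimum is attained at c = q, i.e. E[X | X ≥ q] = q + (1 − α)⁻¹ · E[max(X − q, 0)]. -/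
open MeasureTheory

/-!
On the tail `A = {q ≤ X}` the shortfall `max (X - q) 0` is `X - q`, and off it it vanishes, so
`E[max (X - q) 0] = ∫_A X - q P(A)`; with `P(A) = 1 - α` this is the second identity. The map
`c ↦ max (x - c) 0` is convex with subgradient `-1_{q ≤ x}` at `q`, so integrating that supporting line
gives `E[max (X - c) 0] ≥ E[max (X - q) 0] + (q - c) P(A)`: the Rockafellar–Uryasev objective
is minimised at `c = q`.
-/

lemma max_sub_zero_add_ite_le (x q c : ℝ) :
    max (x - q) 0 + (if q ≤ x then q - c else 0) ≤ max (x - c) 0 := by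
  split_ifs with h
  · rw [max_eq_left (by linarith)]
    linarith [le_max_left (x - c) 0]
  · rw [max_eq_right (by linarith), add_zero]
    exact le_max_right _ _

section Tail

variable {Ω : Type*} [MeasurableSpace Ω] {P : Measure Ω} {X : Ω → ℝ}

lemma integral_max_sub_zero_eq [IsFiniteMeasure P] (hXm : Measurable X) (hX : Integrable X P)
    (q : ℝ) :
    ∫ ω, max (X ω - q) 0 ∂P = ∫ ω in {ω | q ≤ X ω}, X ω ∂P - q * P.real {ω | q ≤ X ω} := by
  have hA : MeasurableSet {ω | q ≤ X ω} := measurableSet_le measurable_const hXm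
  have hmax : (fun ω ↦ max (X ω - q) 0) = {ω | q ≤ X ω}.indicator (fun ω ↦ X ω - q) := by
    ext ω
    by_cases h : q ≤ X ω
    · simp [h]
    · simp [h, (not_le.mp h).le]
  rw [hmax, integral_indicator hA, integral_sub hX.integrableOn (integrableOn_const),
    setIntegral_const, smul_eq_mul, mul_comm]

lemma integral_max_sub_zero_add_le [IsFiniteMeasure P] (hXm : Measurable X)
    (hX : Integrable X P) (q c : ℝ) :
    ∫ ω, max (X ω - q) 0 ∂P + (q - c) * P.real {ω | q ≤ X ω} ≤ ∫ ω, max (X ω - c) 0 ∂P := by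
  have hA : MeasurableSet {ω | q ≤ X ω} := measurableSet_le measurable_const hXm
  have hpos (c : ℝ) : Integrable (fun ω ↦ max (X ω - c) 0) P :=
    (hX.sub (integrable_const c)).pos_part
  have hind : Integrable ({ω | q ≤ X ω}.indicator fun _ ↦ q - c) P :=
    (integrable_const (q - c)).indicator hA
  calc ∫ ω, max (X ω - q) 0 ∂P + (q - c) * P.real {ω | q ≤ X ω}
      = ∫ ω, max (X ω - q) 0 + {ω | q ≤ X ω}.indicator (fun _ ↦ q - c) ω ∂P := by
        rw [integral_add (hpos q) hind, integral_indicator_const _ hA, smul_eq_mul, mul_comm]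
    _ ≤ ∫ ω, max (X ω - c) 0 ∂P :=
        integral_mono ((hpos q).add hind) (hpos c) fun ω ↦ by
          simpa [Set.indicator_apply] using max_sub_zero_add_ite_le (X ω) q c

lemma cvar_eq_of_measureReal_setOf_le [IsFiniteMeasure P] {α : ℝ} (hα : α < 1)
    (hXm : Measurable X) (hX : Integrable X P) {q : ℝ}
    (hq : P.real {ω | q ≤ X ω} = 1 - α) :
    cvar P α X = q + (1 - α)⁻¹ * ∫ ω, max (X ω - q) 0 ∂P := by
  have hα' : 0 < 1 - α := sub_pos.mpr hα
  refine ciInf_eq_of_forall_ge_of_forall_gt_exists_lt (fun c ↦ ?_) fun w hw ↦ ⟨q, hw⟩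
  have key := integral_max_sub_zero_add_le hXm hX q c
  rw [hq] at key
  have : (1 - α)⁻¹ * ((q - c) * (1 - α)) = q - c := by field_simp
  linarith [mul_le_mul_of_nonneg_left key (inv_nonneg.mpr hα'.le)]

lemma measureReal_setOf_le_eq [IsProbabilityMeasure P] (hXm : Measurable X) {α q : ℝ}
    (hα : 0 ≤ α) (hq : P {ω | X ω < q} = ENNReal.ofReal α) :
    P.real {ω | q ≤ X ω} = 1 - α := by
  have hcompl : {ω | q ≤ X ω} = {ω | X ω < q}ᶜ := by
    ext ω
    simp
  rw [hcompl, probReal_compl_eq_one_sub (measurableSet_lt hXm measurable_const), measureReal_def,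
    hq, ENNReal.toReal_ofReal hα]

end Tail

theorem tail_condExp_eq_cvar_general {Ω : Type*} [MeasurableSpace Ω] (P : Measure Ω)
    [IsProbabilityMeasure P] (α : ℝ) (hα₀ : 0 < α) (hα₁ : α < 1)
    (X : Ω → ℝ) (hXm : Measurable X) (hX : Integrable X P)
    (q : ℝ) (hq_lt : P {ω | X ω < q} = ENNReal.ofReal α) :
    (∫ ω in {ω | q ≤ X ω}, X ω ∂P) / (P {ω | q ≤ X ω}).toReal = cvar P α X ∧
      (∫ ω in {ω | q ≤ X ω}, X ω ∂P) / (P {ω | q ≤ X ω}).toReal =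
        q + (1 - α)⁻¹ * ∫ ω, max (X ω - q) 0 ∂P := by
  have hA : P.real {ω | q ≤ X ω} = 1 - α := measureReal_setOf_le_eq hXm hα₀.le hq_lt
  have hattained : (∫ ω in {ω | q ≤ X ω}, X ω ∂P) / (P {ω | q ≤ X ω}).toReal =
      q + (1 - α)⁻¹ * ∫ ω, max (X ω - q) 0 ∂P := by
    rw [← measureReal_def, integral_max_sub_zero_eq hXm hX, hA]
    field_simp [(sub_pos.mpr hα₁).ne']
    ring
  exact ⟨hattained.trans (cvar_eq_of_measureReal_setOf_le hα₁ hXm hX hA).symm, hattained⟩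

/-- If `q` is a continuity point with `P(X < q) = α` and `P(X = q) = 0`, then the tail
conditional expectation `E[X | X ≥ q]` equals the Rockafellar–Uryasev infimum, and the
infimum is attained at `c = q`. -/
theorem tail_condExp_eq_cvar {Ω : Type*} [MeasurableSpace Ω] (P : Measure Ω)
    [IsProbabilityMeasure P] (α : ℝ) (hα₀ : 0 < α) (hα₁ : α < 1)
    (X : Ω → ℝ) (hXm : Measurable X) (hX : Integrable X P)
    (q : ℝ) (hq_lt : P {ω | X ω < q} = ENNReal.ofReal α)
    (hq_eq : P {ω | X ω = q} = 0) :
    (∫ ω in {ω | q ≤ X ω}, X ω ∂P) / (P {ω | q ≤ X ω}).toReal = cvar P α X ∧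
      (∫ ω in {ω | q ≤ X ω}, X ω ∂P) / (P {ω | q ≤ X ω}).toReal =
        q + (1 - α)⁻¹ * ∫ ω, max (X ω - q) 0 ∂P :=
  tail_condExp_eq_cvar_general P α hα₀ hα₁ X hXm hX q hq_lt
end
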